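/- Every formula F has exactly one →-normal form F' (i.e., F →* F' and F' admits no →-step, and such F' is unique), and this normal form F' contains no occurrence of a quantifier. -/

import Mathlib

/-! Let `nfF` eliminate all quantifiers bottom-up, replacing each `Qx. A` by
`qeRedex Q (nfF A)`. Then `F →* nfF F`, and `nfF F` is quantifier-free, hence a normal form.
Since `nfF` commutes with substitution, contracting a redex anywhere in `F` does not change
`nfF F`; so every formula reachable from `F` has the same image `nfF F`, and a normal form `G`
is its own image, because `G →* nfF G`. -/

mutual
  /-- Terms of first-order logic extended with Hilbert's ε-operator,
  in de Bruijn representation (so formulas are automatically identified up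
  to renaming of bound variables). -/
  inductive Tm : Type
    | var : ℕ → Tm
    | fn : ℕ → (k : ℕ) → (Fin k → Tm) → Tm
    | eps : Fm → Tm
  /-- Formulas; `ex F`, `all F` and `Tm.eps F` bind de Bruijn index 0 of `F`. -/
  inductive Fm : Type
    | pred : ℕ → (k : ℕ) → (Fin k → Tm) → Fm
    | not : Fm → Fm
    | or : Fm → Fm → Fm
    | and : Fm → Fm → Fm
    | imp : Fm → Fm → Fm
    | ex : Fm → Fm
    | all : Fm → Fm
end

/-- Lifting a renaming under a binder. -/
def upRen (r : ℕ → ℕ) : ℕ → ℕ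
  | 0 => 0
  | n + 1 => r n + 1

mutual
  /-- Renaming of free variables in a term. -/
  def renT (r : ℕ → ℕ) : Tm → Tm
    | .var i => .var (r i)
    | .fn f k a => .fn f k (fun i => renT r (a i))
    | .eps F => .eps (renF (upRen r) F)
  /-- Renaming of free variables in a formula. -/
  def renF (r : ℕ → ℕ) : Fm → Fm
    | .pred p k a => .pred p k (fun i => renT r (a i))
    | .not F => .not (renF r F)
    | .or F G => .or (renF r F) (renF r G)
    | .and F G => .and (renF r F) (renF r G)
    | .imp F G => .imp (renF r F) (renF r G)
    | .ex F => .ex (renF (upRen r) F)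
    | .all F => .all (renF (upRen r) F)
end

/-- Lifting a substitution under a binder. -/
def upSub (σ : ℕ → Tm) : ℕ → Tm
  | 0 => .var 0
  | n + 1 => renT Nat.succ (σ n)

mutual
  /-- Capture-avoiding simultaneous substitution on terms. -/
  def subT (σ : ℕ → Tm) : Tm → Tm
    | .var i => σ i
    | .fn f k a => .fn f k (fun i => subT σ (a i))
    | .eps F => .eps (subF (upSub σ) F)
  /-- Capture-avoiding simultaneous substitution on formulas. -/
  def subF (σ : ℕ → Tm) : Fm → Fm
    | .pred p k a => .pred p k (fun i => subT σ (a i))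
    | .not F => .not (subF σ F)
    | .or F G => .or (subF σ F) (subF σ G)
    | .and F G => .and (subF σ F) (subF σ G)
    | .imp F G => .imp (subF σ F) (subF σ G)
    | .ex F => .ex (subF (upSub σ) F)
    | .all F => .all (subF (upSub σ) F)
end

/-- `inst1 F t` is `F{x ↦ t}` for the variable `x` bound just outside `F`
(de Bruijn index 0). -/
def inst1 (F : Fm) (t : Tm) : Fm :=
  subF (fun n => match n with | 0 => t | n + 1 => .var n) F

mutual
  /-- The variable with de Bruijn index `n` occurs free in the term. -/
  def freeT (n : ℕ) : Tm → Prop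
    | .var i => i = n
    | .fn _ _ a => ∃ i, freeT n (a i)
    | .eps F => freeF (n + 1) F
  /-- The variable with de Bruijn index `n` occurs free in the formula. -/
  def freeF (n : ℕ) : Fm → Prop
    | .pred _ _ a => ∃ i, freeT n (a i)
    | .not F => freeF n F
    | .or F G => freeF n F ∨ freeF n G
    | .and F G => freeF n F ∨ freeF n G
    | .imp F G => freeF n F ∨ freeF n G
    | .ex F => freeF (n + 1) F
    | .all F => freeF (n + 1) F
end

mutual
  /-- Number of occurrences of quantifiers (∃ and ∀, but not ε) in a term. -/
  def qcT : Tm → ℕ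
    | .var _ => 0
    | .fn _ _ a => ∑ i, qcT (a i)
    | .eps F => qcF F
  /-- Number of occurrences of quantifiers (∃ and ∀, but not ε) in a formula. -/
  def qcF : Fm → ℕ
    | .pred _ _ a => ∑ i, qcT (a i)
    | .not F => qcF F
    | .or F G => qcF F + qcF G
    | .and F G => qcF F + qcF G
    | .imp F G => qcF F + qcF G
    | .ex F => qcF F + 1
    | .all F => qcF F + 1
end

/-- Quantifier symbols. -/
inductive Quant : Type
  | ex
  | all

/-- `mkQ Q A` is the quantified formula `Qx. A`. -/
def mkQ : Quant → Fm → Fm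
  | .ex, A => .ex A
  | .all, A => .all A

/-- `negQ Q A` is `¬^Q A`: `¬A` for `Q = ∀` and `A` for `Q = ∃`. -/
def negQ : Quant → Fm → Fm
  | .ex, A => A
  | .all, A => .not A

/-- `qeRedex Q A` is `A{x ↦ εx. ¬^Q A}`, the contractum of the redex `Qx. A`. -/
def qeRedex (Q : Quant) (A : Fm) : Fm := inst1 A (.eps (negQ Q A))

mutual
  /-- One rewrite step inside a term, where each rewritten quantified subformula
  `Qx. A` is required to satisfy the side condition `P A`. -/
  inductive StepT (P : Fm → Prop) : Tm → Tm → Prop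
    | fn {f k} {a : Fin k → Tm} {j : Fin k} {t' : Tm} :
        StepT P (a j) t' → StepT P (.fn f k a) (.fn f k (Function.update a j t'))
    | eps {F F'} : StepF P F F' → StepT P (.eps F) (.eps F')
  /-- One rewrite step on formulas: replace one occurrence of a subformula
  `Qx. A` (with `P A`) by `A{x ↦ εx. ¬^Q A}`. -/
  inductive StepF (P : Fm → Prop) : Fm → Fm → Prop
    | root {Q A} : P A → StepF P (mkQ Q A) (qeRedex Q A)
    | pred {p k} {a : Fin k → Tm} {j : Fin k} {t' : Tm} :
        StepT P (a j) t' → StepF P (.pred p k a) (.pred p k (Function.update a j t'))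
    | not {F F'} : StepF P F F' → StepF P (.not F) (.not F')
    | orL {F F' G} : StepF P F F' → StepF P (.or F G) (.or F' G)
    | orR {F G G'} : StepF P G G' → StepF P (.or F G) (.or F G')
    | andL {F F' G} : StepF P F F' → StepF P (.and F G) (.and F' G)
    | andR {F G G'} : StepF P G G' → StepF P (.and F G) (.and F G')
    | impL {F F' G} : StepF P F F' → StepF P (.imp F G) (.imp F' G)
    | impR {F G G'} : StepF P G G' → StepF P (.imp F G) (.imp F G')
    | ex {F F'} : StepF P F F' → StepF P (.ex F) (.ex F')
    | all {F F'} : StepF P F F' → StepF P (.all F) (.all F')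
end

/-- The quantifier-elimination rewrite relation `→` on formulas. -/
def Step : Fm → Fm → Prop := StepF (fun _ => True)

/-- `→₀`: the steps rewriting a vacuous quantifier (bound variable not free in the body). -/
def Step0 : Fm → Fm → Prop := StepF (fun A => ¬ freeF 0 A)

/-- `→₁`: the steps rewriting a non-vacuous quantifier. -/
def Step1 : Fm → Fm → Prop := StepF (fun A => freeF 0 A)

/-- `→ℐ`: the innermost steps, whose rewritten subformula `Qx. A` contains no
quantifier other than the outermost `Q`. -/
def StepI : Fm → Fm → Prop := StepF (fun A => qcF A = 0)

open Relation Function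

theorem upRen_comp (r s : ℕ → ℕ) : upRen r ∘ upRen s = upRen (r ∘ s) := by
  funext n; cases n <;> rfl

mutual
theorem renT_renT (r s : ℕ → ℕ) : ∀ t : Tm, renT r (renT s t) = renT (r ∘ s) t
  | .var _ => rfl
  | .fn _ _ a => by simp only [renT]; exact congrArg _ (funext fun i => renT_renT r s (a i))
  | .eps F => by simp only [renT]; rw [renF_renF, upRen_comp]
theorem renF_renF (r s : ℕ → ℕ) : ∀ F : Fm, renF r (renF s F) = renF (r ∘ s) F
  | .pred _ _ a => by simp only [renF]; exact congrArg _ (funext fun i => renT_renT r s (a i))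
  | .not F => by simp only [renF, renF_renF r s F]
  | .or F G => by simp only [renF, renF_renF r s F, renF_renF r s G]
  | .and F G => by simp only [renF, renF_renF r s F, renF_renF r s G]
  | .imp F G => by simp only [renF, renF_renF r s F, renF_renF r s G]
  | .ex F => by simp only [renF]; rw [renF_renF, upRen_comp]
  | .all F => by simp only [renF]; rw [renF_renF, upRen_comp]
end

theorem upSub_comp_upRen (σ : ℕ → Tm) (r : ℕ → ℕ) : upSub σ ∘ upRen r = upSub (σ ∘ r) := by
  funext n; cases n <;> rfl

mutual
theorem subT_renT (σ : ℕ → Tm) (r : ℕ → ℕ) : ∀ t : Tm, subT σ (renT r t) = subT (σ ∘ r) t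
  | .var _ => rfl
  | .fn _ _ a => by simp only [renT, subT]; exact congrArg _ (funext fun i => subT_renT σ r (a i))
  | .eps F => by simp only [renT, subT]; rw [subF_renF, upSub_comp_upRen]
theorem subF_renF (σ : ℕ → Tm) (r : ℕ → ℕ) : ∀ F : Fm, subF σ (renF r F) = subF (σ ∘ r) F
  | .pred _ _ a => by
    simp only [renF, subF]; exact congrArg _ (funext fun i => subT_renT σ r (a i))
  | .not F => by simp only [renF, subF, subF_renF σ r F]
  | .or F G => by simp only [renF, subF, subF_renF σ r F, subF_renF σ r G]
  | .and F G => by simp only [renF, subF, subF_renF σ r F, subF_renF σ r G]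
  | .imp F G => by simp only [renF, subF, subF_renF σ r F, subF_renF σ r G]
  | .ex F => by simp only [renF, subF]; rw [subF_renF, upSub_comp_upRen]
  | .all F => by simp only [renF, subF]; rw [subF_renF, upSub_comp_upRen]
end

theorem renT_comp_upSub (r : ℕ → ℕ) (σ : ℕ → Tm) :
    renT (upRen r) ∘ upSub σ = upSub (renT r ∘ σ) := by
  funext n; cases n with
  | zero => rfl
  | succ n => simp only [comp_apply, upSub, renT_renT]; rfl

mutual
theorem renT_subT (r : ℕ → ℕ) (σ : ℕ → Tm) : ∀ t : Tm, renT r (subT σ t) = subT (renT r ∘ σ) t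
  | .var _ => rfl
  | .fn _ _ a => by simp only [subT, renT]; exact congrArg _ (funext fun i => renT_subT r σ (a i))
  | .eps F => by simp only [subT, renT]; rw [renF_subF, renT_comp_upSub]
theorem renF_subF (r : ℕ → ℕ) (σ : ℕ → Tm) : ∀ F : Fm, renF r (subF σ F) = subF (renT r ∘ σ) F
  | .pred _ _ a => by
    simp only [subF, renF]; exact congrArg _ (funext fun i => renT_subT r σ (a i))
  | .not F => by simp only [subF, renF, renF_subF r σ F]
  | .or F G => by simp only [subF, renF, renF_subF r σ F, renF_subF r σ G]
  | .and F G => by simp only [subF, renF, renF_subF r σ F, renF_subF r σ G]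
  | .imp F G => by simp only [subF, renF, renF_subF r σ F, renF_subF r σ G]
  | .ex F => by simp only [subF, renF]; rw [renF_subF, renT_comp_upSub]
  | .all F => by simp only [subF, renF]; rw [renF_subF, renT_comp_upSub]
end

theorem subT_comp_upSub (τ σ : ℕ → Tm) : subT (upSub τ) ∘ upSub σ = upSub (subT τ ∘ σ) := by
  funext n; cases n with
  | zero => rfl
  | succ n => simp only [comp_apply, upSub, subT_renT, renT_subT]; rfl

mutual
theorem subT_subT (τ σ : ℕ → Tm) : ∀ t : Tm, subT τ (subT σ t) = subT (subT τ ∘ σ) t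
  | .var _ => rfl
  | .fn _ _ a => by simp only [subT]; exact congrArg _ (funext fun i => subT_subT τ σ (a i))
  | .eps F => by simp only [subT]; rw [subF_subF, subT_comp_upSub]
theorem subF_subF (τ σ : ℕ → Tm) : ∀ F : Fm, subF τ (subF σ F) = subF (subT τ ∘ σ) F
  | .pred _ _ a => by simp only [subF]; exact congrArg _ (funext fun i => subT_subT τ σ (a i))
  | .not F => by simp only [subF, subF_subF τ σ F]
  | .or F G => by simp only [subF, subF_subF τ σ F, subF_subF τ σ G]
  | .and F G => by simp only [subF, subF_subF τ σ F, subF_subF τ σ G]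
  | .imp F G => by simp only [subF, subF_subF τ σ F, subF_subF τ σ G]
  | .ex F => by simp only [subF]; rw [subF_subF, subT_comp_upSub]
  | .all F => by simp only [subF]; rw [subF_subF, subT_comp_upSub]
end

theorem upSub_var : upSub Tm.var = Tm.var := by
  funext n; cases n <;> rfl

mutual
theorem subT_var : ∀ t : Tm, subT Tm.var t = t
  | .var _ => rfl
  | .fn _ _ a => by simp only [subT]; exact congrArg _ (funext fun i => subT_var (a i))
  | .eps F => by simp only [subT]; rw [upSub_var, subF_var F]
theorem subF_var : ∀ F : Fm, subF Tm.var F = F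
  | .pred _ _ a => by simp only [subF]; exact congrArg _ (funext fun i => subT_var (a i))
  | .not F => by simp only [subF, subF_var F]
  | .or F G => by simp only [subF, subF_var F, subF_var G]
  | .and F G => by simp only [subF, subF_var F, subF_var G]
  | .imp F G => by simp only [subF, subF_var F, subF_var G]
  | .ex F => by simp only [subF]; rw [upSub_var, subF_var F]
  | .all F => by simp only [subF]; rw [upSub_var, subF_var F]
end

def instSub (t : Tm) : ℕ → Tm
  | 0 => t
  | n + 1 => .var n

theorem inst1_eq_subF (F : Fm) (t : Tm) : inst1 F t = subF (instSub t) F := rfl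

theorem subF_inst1 (σ : ℕ → Tm) (A : Fm) (t : Tm) :
    subF σ (inst1 A t) = inst1 (subF (upSub σ) A) (subT σ t) := by
  simp only [inst1_eq_subF, subF_subF]
  congr 1
  funext n; cases n with
  | zero => rfl
  | succ n => simp only [comp_apply, upSub, subT_renT]; exact (subT_var _).symm

theorem renF_inst1 (r : ℕ → ℕ) (A : Fm) (t : Tm) :
    renF r (inst1 A t) = inst1 (renF (upRen r) A) (renT r t) := by
  simp only [inst1_eq_subF, renF_subF, subF_renF]
  congr 1
  funext n; cases n <;> rfl

theorem subF_negQ (σ : ℕ → Tm) (Q : Quant) (A : Fm) :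
    subF σ (negQ Q A) = negQ Q (subF σ A) := by cases Q <;> rfl

theorem renF_negQ (r : ℕ → ℕ) (Q : Quant) (A : Fm) :
    renF r (negQ Q A) = negQ Q (renF r A) := by cases Q <;> rfl

theorem subF_qeRedex (σ : ℕ → Tm) (Q : Quant) (A : Fm) :
    subF σ (qeRedex Q A) = qeRedex Q (subF (upSub σ) A) := by
  simp only [qeRedex, subF_inst1, subT, subF_negQ]

theorem renF_qeRedex (r : ℕ → ℕ) (Q : Quant) (A : Fm) :
    renF r (qeRedex Q A) = qeRedex Q (renF (upRen r) A) := by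
  simp only [qeRedex, renF_inst1, renT, renF_negQ]

mutual
def nfT : Tm → Tm
  | .var i => .var i
  | .fn f k a => .fn f k (fun i => nfT (a i))
  | .eps F => .eps (nfF F)
def nfF : Fm → Fm
  | .pred p k a => .pred p k (fun i => nfT (a i))
  | .not F => .not (nfF F)
  | .or F G => .or (nfF F) (nfF G)
  | .and F G => .and (nfF F) (nfF G)
  | .imp F G => .imp (nfF F) (nfF G)
  | .ex F => qeRedex .ex (nfF F)
  | .all F => qeRedex .all (nfF F)
end

theorem nfF_mkQ (Q : Quant) (A : Fm) : nfF (mkQ Q A) = qeRedex Q (nfF A) := by cases Q <;> rfl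

theorem nfF_negQ (Q : Quant) (A : Fm) : nfF (negQ Q A) = negQ Q (nfF A) := by cases Q <;> rfl

mutual
theorem nfT_renT (r : ℕ → ℕ) : ∀ t : Tm, nfT (renT r t) = renT r (nfT t)
  | .var _ => rfl
  | .fn _ _ a => by simp only [renT, nfT]; exact congrArg _ (funext fun i => nfT_renT r (a i))
  | .eps F => by simp only [renT, nfT, nfF_renF (upRen r) F]
theorem nfF_renF (r : ℕ → ℕ) : ∀ F : Fm, nfF (renF r F) = renF r (nfF F)
  | .pred _ _ a => by simp only [renF, nfF]; exact congrArg _ (funext fun i => nfT_renT r (a i))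
  | .not F => by simp only [renF, nfF, nfF_renF r F]
  | .or F G => by simp only [renF, nfF, nfF_renF r F, nfF_renF r G]
  | .and F G => by simp only [renF, nfF, nfF_renF r F, nfF_renF r G]
  | .imp F G => by simp only [renF, nfF, nfF_renF r F, nfF_renF r G]
  | .ex F => by simp only [renF, nfF, nfF_renF (upRen r) F, renF_qeRedex]
  | .all F => by simp only [renF, nfF, nfF_renF (upRen r) F, renF_qeRedex]
end

theorem nfT_comp_upSub (σ : ℕ → Tm) : nfT ∘ upSub σ = upSub (nfT ∘ σ) := by
  funext n; cases n with
  | zero => rfl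
  | succ n => exact nfT_renT _ _

mutual
theorem nfT_subT (σ : ℕ → Tm) : ∀ t : Tm, nfT (subT σ t) = subT (nfT ∘ σ) (nfT t)
  | .var _ => rfl
  | .fn _ _ a => by simp only [subT, nfT]; exact congrArg _ (funext fun i => nfT_subT σ (a i))
  | .eps F => by simp only [subT, nfT, nfF_subF (upSub σ) F, nfT_comp_upSub]
theorem nfF_subF (σ : ℕ → Tm) : ∀ F : Fm, nfF (subF σ F) = subF (nfT ∘ σ) (nfF F)
  | .pred _ _ a => by simp only [subF, nfF]; exact congrArg _ (funext fun i => nfT_subT σ (a i))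
  | .not F => by simp only [subF, nfF, nfF_subF σ F]
  | .or F G => by simp only [subF, nfF, nfF_subF σ F, nfF_subF σ G]
  | .and F G => by simp only [subF, nfF, nfF_subF σ F, nfF_subF σ G]
  | .imp F G => by simp only [subF, nfF, nfF_subF σ F, nfF_subF σ G]
  | .ex F => by simp only [subF, nfF, nfF_subF (upSub σ) F, nfT_comp_upSub, subF_qeRedex]
  | .all F => by simp only [subF, nfF, nfF_subF (upSub σ) F, nfT_comp_upSub, subF_qeRedex]
end

theorem nfF_qeRedex (Q : Quant) (A : Fm) : nfF (qeRedex Q A) = nfF (mkQ Q A) := by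
  have : nfT ∘ instSub (.eps (negQ Q A)) = instSub (.eps (negQ Q (nfF A))) := by
    funext n; cases n with
    | zero => simp only [comp_apply, instSub, nfT, nfF_negQ]
    | succ n => rfl
  rw [nfF_mkQ, qeRedex, inst1_eq_subF, nfF_subF, this]
  rfl

mutual
theorem nfT_eq_of_stepT {P : Fm → Prop} : ∀ {t t' : Tm}, StepT P t t' → nfT t' = nfT t
  | _, _, .fn h => by
    simp only [nfT]
    exact congrArg _ ((comp_update _ _ _ _).trans (update_eq_self_iff.2 (nfT_eq_of_stepT h)))
  | _, _, .eps h => by simp only [nfT, nfF_eq_of_stepF h]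
theorem nfF_eq_of_stepF {P : Fm → Prop} : ∀ {F F' : Fm}, StepF P F F' → nfF F' = nfF F
  | _, _, .root _ => nfF_qeRedex _ _
  | _, _, .pred h => by
    simp only [nfF]
    exact congrArg _ ((comp_update _ _ _ _).trans (update_eq_self_iff.2 (nfT_eq_of_stepT h)))
  | _, _, .not h => by simp only [nfF, nfF_eq_of_stepF h]
  | _, _, .orL h => by simp only [nfF, nfF_eq_of_stepF h]
  | _, _, .orR h => by simp only [nfF, nfF_eq_of_stepF h]
  | _, _, .andL h => by simp only [nfF, nfF_eq_of_stepF h]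
  | _, _, .andR h => by simp only [nfF, nfF_eq_of_stepF h]
  | _, _, .impL h => by simp only [nfF, nfF_eq_of_stepF h]
  | _, _, .impR h => by simp only [nfF, nfF_eq_of_stepF h]
  | _, _, .ex h => by simp only [nfF, nfF_eq_of_stepF h]
  | _, _, .all h => by simp only [nfF, nfF_eq_of_stepF h]
end

theorem nfF_eq_of_reflTransGen {P : Fm → Prop} {F G : Fm} (h : ReflTransGen (StepF P) F G) :
    nfF G = nfF F := by
  induction h with
  | refl => rfl
  | tail _ hstep ih => exact (nfF_eq_of_stepF hstep).trans ih

mutual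
theorem qcT_renT (r : ℕ → ℕ) : ∀ t : Tm, qcT (renT r t) = qcT t
  | .var _ => rfl
  | .fn _ _ a => by simp only [renT, qcT]; exact Finset.sum_congr rfl fun i _ => qcT_renT r (a i)
  | .eps F => qcF_renF (upRen r) F
theorem qcF_renF (r : ℕ → ℕ) : ∀ F : Fm, qcF (renF r F) = qcF F
  | .pred _ _ a => by simp only [renF, qcF]; exact Finset.sum_congr rfl fun i _ => qcT_renT r (a i)
  | .not F => qcF_renF r F
  | .or F G => by simp only [renF, qcF, qcF_renF r F, qcF_renF r G]
  | .and F G => by simp only [renF, qcF, qcF_renF r F, qcF_renF r G]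
  | .imp F G => by simp only [renF, qcF, qcF_renF r F, qcF_renF r G]
  | .ex F => by simp only [renF, qcF, qcF_renF (upRen r) F]
  | .all F => by simp only [renF, qcF, qcF_renF (upRen r) F]
end

theorem qcT_upSub {σ : ℕ → Tm} (hσ : ∀ n, qcT (σ n) = 0) (n : ℕ) : qcT (upSub σ n) = 0 := by
  cases n with
  | zero => rfl
  | succ n => rw [upSub, qcT_renT, hσ]

mutual
theorem qcT_subT {σ : ℕ → Tm} (hσ : ∀ n, qcT (σ n) = 0) : ∀ t : Tm, qcT (subT σ t) = qcT t
  | .var i => hσ i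
  | .fn _ _ a => by simp only [subT, qcT]; exact Finset.sum_congr rfl fun i _ => qcT_subT hσ (a i)
  | .eps F => qcF_subF (qcT_upSub hσ) F
theorem qcF_subF {σ : ℕ → Tm} (hσ : ∀ n, qcT (σ n) = 0) : ∀ F : Fm, qcF (subF σ F) = qcF F
  | .pred _ _ a => by simp only [subF, qcF]; exact Finset.sum_congr rfl fun i _ => qcT_subT hσ (a i)
  | .not F => qcF_subF hσ F
  | .or F G => by simp only [subF, qcF, qcF_subF hσ F, qcF_subF hσ G]
  | .and F G => by simp only [subF, qcF, qcF_subF hσ F, qcF_subF hσ G]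
  | .imp F G => by simp only [subF, qcF, qcF_subF hσ F, qcF_subF hσ G]
  | .ex F => by simp only [subF, qcF, qcF_subF (qcT_upSub hσ) F]
  | .all F => by simp only [subF, qcF, qcF_subF (qcT_upSub hσ) F]
end

theorem qcF_qeRedex (Q : Quant) {A : Fm} (hA : qcF A = 0) : qcF (qeRedex Q A) = 0 := by
  have hσ : ∀ n, qcT (instSub (.eps (negQ Q A)) n) = 0
    | 0 => by cases Q <;> exact hA
    | _ + 1 => rfl
  rw [qeRedex, inst1_eq_subF, qcF_subF hσ, hA]

mutual
theorem qcT_nfT : ∀ t : Tm, qcT (nfT t) = 0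
  | .var _ => rfl
  | .fn _ _ a => by simp only [nfT, qcT, qcT_nfT, Finset.sum_const_zero]
  | .eps F => qcF_nfF F
theorem qcF_nfF : ∀ F : Fm, qcF (nfF F) = 0
  | .pred _ _ a => by simp only [nfF, qcF, qcT_nfT, Finset.sum_const_zero]
  | .not F => qcF_nfF F
  | .or F G => by simp only [nfF, qcF, qcF_nfF F, qcF_nfF G]
  | .and F G => by simp only [nfF, qcF, qcF_nfF F, qcF_nfF G]
  | .imp F G => by simp only [nfF, qcF, qcF_nfF F, qcF_nfF G]
  | .ex F => qcF_qeRedex .ex (qcF_nfF F)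
  | .all F => qcF_qeRedex .all (qcF_nfF F)
end

mutual
theorem qcT_ne_zero_of_stepT {P : Fm → Prop} : ∀ {t t' : Tm}, StepT P t t' → qcT t ≠ 0
  | _, _, .fn h => by
    simp only [qcT, ne_eq, Finset.sum_eq_zero_iff, Finset.mem_univ, true_implies, not_forall]
    exact ⟨_, qcT_ne_zero_of_stepT h⟩
  | _, _, .eps h => qcF_ne_zero_of_stepF h
theorem qcF_ne_zero_of_stepF {P : Fm → Prop} : ∀ {F F' : Fm}, StepF P F F' → qcF F ≠ 0
  | _, _, .root (Q := Q) _ => by cases Q <;> simp [mkQ, qcF]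
  | _, _, .pred h => by
    simp only [qcF, ne_eq, Finset.sum_eq_zero_iff, Finset.mem_univ, true_implies, not_forall]
    exact ⟨_, qcT_ne_zero_of_stepT h⟩
  | _, _, .not h => by simpa only [qcF] using qcF_ne_zero_of_stepF h
  | _, _, .orL h => by simp [qcF, qcF_ne_zero_of_stepF h]
  | _, _, .orR h => by simp [qcF, qcF_ne_zero_of_stepF h]
  | _, _, .andL h => by simp [qcF, qcF_ne_zero_of_stepF h]
  | _, _, .andR h => by simp [qcF, qcF_ne_zero_of_stepF h]
  | _, _, .impL h => by simp [qcF, qcF_ne_zero_of_stepF h]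
  | _, _, .impR h => by simp [qcF, qcF_ne_zero_of_stepF h]
  | _, _, .ex _ => by simp [qcF]
  | _, _, .all _ => by simp [qcF]
end

theorem not_stepF_nfF {P : Fm → Prop} (F G : Fm) : ¬ StepF P (nfF F) G :=
  fun h => qcF_ne_zero_of_stepF h (qcF_nfF F)

theorem reflTransGen_comp_update {ι α β : Type*} [Fintype ι] [DecidableEq ι]
    {r : α → α → Prop} {s : β → β → Prop} (C : (ι → α) → β)
    (hC : ∀ a j x, r (a j) x → s (C a) (C (update a j x)))
    {a a' : ι → α} (h : ∀ i, ReflTransGen r (a i) (a' i)) : ReflTransGen s (C a) (C a') := by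
  have update_one : ∀ b j x, ReflTransGen r (b j) x → ReflTransGen s (C b) (C (update b j x)) := by
    intro b j x hx
    induction hx with
    | refl => rw [update_eq_self]
    | @tail y z _ hyz ih =>
      refine ih.tail ?_
      simpa only [update_idem] using hC (update b j y) j z (by rwa [update_self])
  have update_on : ∀ S : Finset ι, ReflTransGen s (C a) (C (S.piecewise a' a)) := by
    intro S
    induction S using Finset.induction_on with
    | empty => rw [Finset.piecewise_empty]
    | insert j S hj ih =>
      rw [Finset.piecewise_insert]
      exact ih.trans (update_one _ _ _ (by rw [Finset.piecewise_eq_of_notMem _ _ _ hj]; exact h j))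
  simpa only [Finset.piecewise_univ] using update_on Finset.univ

theorem reflTransGen_map₂ {α β γ : Type*} {r : α → α → Prop} {r' : β → β → Prop}
    {s : γ → γ → Prop} (C : α → β → γ) (hl : ∀ a a' b, r a a' → s (C a b) (C a' b))
    (hr : ∀ a b b', r' b b' → s (C a b) (C a b')) {a a' : α} {b b' : β}
    (ha : ReflTransGen r a a') (hb : ReflTransGen r' b b') : ReflTransGen s (C a b) (C a' b') :=
  (ha.lift (C · b) fun _ _ h => hl _ _ _ h).trans (hb.lift (C a') fun _ _ h => hr _ _ _ h)

mutual
theorem reflTransGen_nfT : ∀ t : Tm, ReflTransGen (StepT fun _ => True) t (nfT t)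
  | .var _ => .refl
  | .fn f k a => reflTransGen_comp_update (Tm.fn f k) (fun _ _ _ => StepT.fn)
      fun i => reflTransGen_nfT (a i)
  | .eps F => (reflTransGen_nfF F).lift Tm.eps fun _ _ => StepT.eps
theorem reflTransGen_nfF : ∀ F : Fm, ReflTransGen Step F (nfF F)
  | .pred p k a => reflTransGen_comp_update (Fm.pred p k) (fun _ _ _ => StepF.pred)
      fun i => reflTransGen_nfT (a i)
  | .not F => (reflTransGen_nfF F).lift Fm.not fun _ _ => StepF.not
  | .or F G => reflTransGen_map₂ Fm.or (fun _ _ _ => StepF.orL) (fun _ _ _ => StepF.orR)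
      (reflTransGen_nfF F) (reflTransGen_nfF G)
  | .and F G => reflTransGen_map₂ Fm.and (fun _ _ _ => StepF.andL) (fun _ _ _ => StepF.andR)
      (reflTransGen_nfF F) (reflTransGen_nfF G)
  | .imp F G => reflTransGen_map₂ Fm.imp (fun _ _ _ => StepF.impL) (fun _ _ _ => StepF.impR)
      (reflTransGen_nfF F) (reflTransGen_nfF G)
  | .ex F => ((reflTransGen_nfF F).lift Fm.ex fun _ _ => StepF.ex).tail
      (StepF.root (Q := .ex) trivial)
  | .all F => ((reflTransGen_nfF F).lift Fm.all fun _ _ => StepF.all).tail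
      (StepF.root (Q := .all) trivial)
end

theorem eq_nfF_of_forall_not_step {F : Fm} (hF : ∀ G, ¬ Step F G) : F = nfF F := by
  rcases (reflTransGen_nfF F).cases_head with h | ⟨G, hG, -⟩
  · exact h
  · exact absurd hG (hF G)

/-- every formula has exactly one `→`-normal form, and this
normal form contains no quantifier. -/
theorem stmt14 : ∀ F : Fm, ∃ F' : Fm,
    (Relation.ReflTransGen Step F F' ∧ (∀ G : Fm, ¬ Step F' G) ∧ qcF F' = 0) ∧
    ∀ F'' : Fm, Relation.ReflTransGen Step F F'' → (∀ G : Fm, ¬ Step F'' G) →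
      F'' = F' := by
  intro F
  refine ⟨nfF F, ⟨reflTransGen_nfF F, not_stepF_nfF F, qcF_nfF F⟩, fun F'' hF'' hnormal => ?_⟩
  calc F'' = nfF F'' := eq_nfF_of_forall_not_step hnormal
    _ = nfF F := nfF_eq_of_reflTransGen hF''
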